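/- arXiv:2502.14371 — 2 statements merged into one kernel-verified Lean document; each statement's English description precedes it below -/
import Mathlib

section
/- Let H be a complete bipartite graph with finite parts (A,B) and nonnegative real edge weights such that no two distinct matchings in H have the same total weight. Let A' ⊆ A, B' ⊆ B and 1 < r ≤ min(|A'|,|B'|), and let M^{r−1} and M^{r} be the unique maximum-weight matchings with r−1 and r edges, respectively, in H[A',B']. Then the symmetric difference M^{r−1} Δ M^{r} forms a single path; consequently every vertex covered by M^{r−1} is also covered by M^{r}. -/
/-!
Write `P = M₁ \ M₂` and `Q = M₂ \ M₁`, so that `|Q| = |P| + 1`. In the line graph of `P ∪ Q`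
every edge joins `P` to `Q` and every vertex of `P` has degree at most two, so a connected
component with `p` vertices in `P` has at most `p + 1` in `Q`; hence some component `K` has
exactly one more edge of `M₂` than of `M₁`. Exchanging `M₁` and `M₂` along `K` yields matchings
with `r` and `r - 1` edges whose weights add up to `w(M₁) + w(M₂)`, so by maximality and
distinctness of weights `M₁ Δ K = M₂`, that is, `K` is all of `P ∪ Q`. The same count rules out
an edge of `P` with an endpoint not covered by `M₂`: such an edge has degree at most one.
-/

open MeasureTheory ProbabilityTheory Filter
open scoped ENNReal

namespace ClassEF

variable {A B : Type*}

/-- A set of edges of a bipartite graph is a matching if every vertex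
appears in at most one edge. -/
def IsMatching (M : Finset (A × B)) : Prop :=
  (∀ e ∈ M, ∀ e' ∈ M, e.1 = e'.1 → e = e') ∧
  (∀ e ∈ M, ∀ e' ∈ M, e.2 = e'.2 → e = e')

/-- Total weight of a set of edges. -/
def weightSum (w : A → B → ℝ) (M : Finset (A × B)) : ℝ :=
  ∑ e ∈ M, w e.1 e.2

/-- A left vertex is covered by a matching. -/
def coveredA (M : Finset (A × B)) (a : A) : Prop := ∃ b, (a, b) ∈ M

/-- A right vertex is covered by a matching. -/
def coveredB (M : Finset (A × B)) (b : B) : Prop := ∃ a, (a, b) ∈ M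

/-- `M` is a maximum-weight matching among the matchings with `r` edges in the
(complete bipartite) subgraph induced by `A'` and `B'`. -/
def IsMaxMatchingOfSize [DecidableEq A] [DecidableEq B]
    (w : A → B → ℝ) (A' : Finset A) (B' : Finset B) (r : ℕ)
    (M : Finset (A × B)) : Prop :=
  IsMatching M ∧ M ⊆ A' ×ˢ B' ∧ M.card = r ∧
  ∀ M' : Finset (A × B), IsMatching M' → M' ⊆ A' ×ˢ B' → M'.card = r →
    weightSum w M' ≤ weightSum w M

/-- `M` is a maximum-weight matching (among matchings of arbitrary size). -/
def IsMaxWeightMatching (w : A → B → ℝ) (M : Finset (A × B)) : Prop :=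
  IsMatching M ∧ ∀ M' : Finset (A × B), IsMatching M' → weightSum w M' ≤ weightSum w M

open scoped Classical in
/-- The assignment valuation: the maximum total weight of a matching between
the agents of `Np` and the items of `S`. -/
noncomputable def vval [DecidableEq A] [DecidableEq B]
    (w : A → B → ℝ) (Np : Finset A) (S : Finset B) : ℝ :=
  ((Np ×ˢ S).powerset.filter fun M => IsMatching M).sup'
    ⟨∅, by simp [IsMatching]⟩ (weightSum w)

/-- The set of items matched to an agent of `S` under the matching `M`. -/
def bundleOf [DecidableEq A] [DecidableEq B] (M : Finset (A × B)) (S : Finset A) : Finset B :=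
  (M.filter fun e => e.1 ∈ S).image Prod.snd

/-- The total utility received by the agents of `S` under the matching `M`. -/
def classUtil [DecidableEq A] (w : A → B → ℝ) (M : Finset (A × B)) (S : Finset A) : ℝ :=
  ∑ e ∈ M.filter (fun e => e.1 ∈ S), w e.1 e.2

/-- Class envy-freeness. -/
def ClassEnvyFree [DecidableEq A] [DecidableEq B] {k : ℕ}
    (w : A → B → ℝ) (cls : Fin k → Finset A) (M : Finset (A × B)) : Prop :=
  ∀ p q : Fin k, p ≠ q → vval w (cls p) (bundleOf M (cls q)) ≤ classUtil w M (cls p)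

/-- Item `j` is wasted for the matching `M`. -/
def Wasted [DecidableEq A] [DecidableEq B] {k : ℕ}
    (w : A → B → ℝ) (cls : Fin k → Finset A) (M : Finset (A × B)) (j : B) : Prop :=
  ((∀ i : A, (i, j) ∉ M) ∧
    ∃ p, vval w (cls p) (bundleOf M (cls p)) < vval w (cls p) (insert j (bundleOf M (cls p)))) ∨
  (∃ q, j ∈ bundleOf M (cls q) ∧
    vval w (cls q) (bundleOf M (cls q)) = vval w (cls q) ((bundleOf M (cls q)).erase j) ∧
    ∃ p, p ≠ q ∧
      vval w (cls p) (bundleOf M (cls p)) < vval w (cls p) (insert j (bundleOf M (cls p))))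

/-- A matching is non-wasteful if no item is wasted. -/
def NonWasteful [DecidableEq A] [DecidableEq B] {k : ℕ}
    (w : A → B → ℝ) (cls : Fin k → Finset A) (M : Finset (A × B)) : Prop :=
  ∀ j : B, ¬ Wasted w cls M j

/-- `cls` partitions the agents into `k` disjoint nonempty classes. -/
def IsClassPartition {n k : ℕ} (cls : Fin k → Finset (Fin n)) : Prop :=
  (∀ p, (cls p).Nonempty) ∧ (∀ p q : Fin k, p ≠ q → Disjoint (cls p) (cls q)) ∧
  Finset.univ.biUnion cls = (Finset.univ : Finset (Fin n))

/-- The maximum class size. -/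
def maxClassSize {n k : ℕ} (cls : Fin k → Finset (Fin n)) : ℕ :=
  Finset.univ.sup fun p => (cls p).card

/-- The minimum class size. -/
noncomputable def minClassSize {n k : ℕ} (cls : Fin k → Finset (Fin n)) : ℕ :=
  sInf (Set.range fun p => (cls p).card)

/-- Marginal value of the item `j` for the bundle `S` of a class with agent set `Np`. -/
noncomputable def marginalVal [DecidableEq A] [DecidableEq B]
    (w : A → B → ℝ) (Np : Finset A) (S : Finset B) (j : B) : ℝ :=
  vval w Np (insert j S) - vval w Np S

/-- The items remaining once each class `p` holds the bundle `Bu p`. -/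
def remainingItems [Fintype B] [DecidableEq B] {k : ℕ} (Bu : Fin k → Finset B) : Finset B :=
  Finset.univ \ Finset.univ.biUnion Bu

/-- One selection step of class `p` in the round-robin algorithm, acting on the
tuple of current bundles: if some remaining item has positive marginal value,
class `p` adds to its bundle a remaining item of maximum marginal value;
otherwise nothing happens. -/
def ClassStep [Fintype B] [DecidableEq A] [DecidableEq B] {k : ℕ}
    (w : A → B → ℝ) (cls : Fin k → Finset A) (p : Fin k)
    (Bu Bu' : Fin k → Finset B) : Prop :=
  (∃ j ∈ remainingItems Bu,
      0 < marginalVal w (cls p) (Bu p) j ∧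
      (∀ j' ∈ remainingItems Bu,
        marginalVal w (cls p) (Bu p) j' ≤ marginalVal w (cls p) (Bu p) j) ∧
      Bu' = Function.update Bu p (insert j (Bu p))) ∨
  ((∀ j ∈ remainingItems Bu, marginalVal w (cls p) (Bu p) j ≤ 0) ∧ Bu' = Bu)

/-- One round of the round-robin algorithm: the classes `p = 0, …, k-1` perform
their selection steps in increasing order. -/
def RoundStep [Fintype B] [DecidableEq A] [DecidableEq B] {k : ℕ}
    (w : A → B → ℝ) (cls : Fin k → Finset A) (Bu Bu' : Fin k → Finset B) : Prop :=
  ∃ f : Fin (k + 1) → Fin k → Finset B,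
    f 0 = Bu ∧ f (Fin.last k) = Bu' ∧
    ∀ p : Fin k, ClassStep w cls p (f p.castSucc) (f p.succ)

/-- `M` is a possible output of the round-robin algorithm: starting from empty
bundles, rounds are performed until no class assigns positive marginal value to
any remaining item, and `M` is obtained by matching each class `p` with its final
bundle `Bu p` via a maximum-weight matching. -/
def IsRoundRobinOutput [Fintype B] [DecidableEq A] [DecidableEq B] {k : ℕ}
    (w : A → B → ℝ) (cls : Fin k → Finset A) (M : Finset (A × B)) : Prop :=
  ∃ Bu : Fin k → Finset B,
    Relation.ReflTransGen (RoundStep w cls) (fun _ => ∅) Bu ∧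
    (∀ p, ∀ j ∈ remainingItems Bu, marginalVal w (cls p) (Bu p) j ≤ 0) ∧
    IsMatching M ∧
    (∀ p : Fin k, ∀ e ∈ M, e.1 ∈ cls p → e.2 ∈ Bu p) ∧
    (∀ p : Fin k, classUtil w M (cls p) = vval w (cls p) (Bu p))

/-- An `(α,β)`-PDF-bounded distribution on `[0,1]`: it has a density bounded
between `a` and `b` on `[0,1]` and vanishing outside `[0,1]`. -/
def PDFBounded (D : Measure ℝ) (a b : ℝ) : Prop :=
  ∃ f : ℝ → ℝ,
    (∀ x ∈ Set.Icc (0 : ℝ) 1, a ≤ f x ∧ f x ≤ b) ∧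
    (∀ x, x ∉ Set.Icc (0 : ℝ) 1 → f x = 0) ∧
    D = MeasureTheory.volume.withDensity fun x => ENNReal.ofReal (f x)

/-- The reversed exponential distribution `ReExp(λ)`, with density
`λ e^{-λ(1-x)}` on `(-∞, 1]`. -/
noncomputable def reExp (lam : ℝ) : Measure ℝ :=
  MeasureTheory.volume.withDensity fun x =>
    ENNReal.ofReal (if x ≤ 1 then lam * Real.exp (-lam * (1 - x)) else 0)

/-- An acceptable alternating path of length `ℓ` for the threshold `w0`, of the
matching `Mopt`, inside the bipartite graph on right vertex set `S`: it visits
distinct matched left vertices `i 0, …, i (ℓ-1)` and ends in an unmatched right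
vertex `j'`, and all its non-matching edges have weight at least `w0`. -/
def AcceptablePath (w : A → B → ℝ) (S : Finset B)
    (Mopt : Finset (A × B)) (w0 : ℝ) (ℓ : ℕ) : Prop :=
  ∃ hℓ : 0 < ℓ, ∃ (i : Fin ℓ → A) (b : Fin ℓ → B) (j' : B),
    Function.Injective i ∧
    (∀ t, (i t, b t) ∈ Mopt) ∧
    j' ∈ S ∧ (∀ a : A, (a, j') ∉ Mopt) ∧
    (∀ t : Fin ℓ, ∀ ht : (t : ℕ) + 1 < ℓ, w0 ≤ w (i t) (b ⟨(t : ℕ) + 1, ht⟩)) ∧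
    w0 ≤ w (i ⟨ℓ - 1, Nat.sub_lt hℓ Nat.one_pos⟩) j'

/-- An acceptable alternating cycle of length `ℓ` for the threshold `w0`, of the
matching `Mopt`: it visits distinct matched left vertices `i 0, …, i (ℓ-1)` and
all its non-matching edges have weight at least `w0`. -/
def AcceptableCycle (w : A → B → ℝ)
    (Mopt : Finset (A × B)) (w0 : ℝ) (ℓ : ℕ) : Prop :=
  ∃ hℓ : 0 < ℓ, ∃ (i : Fin ℓ → A) (b : Fin ℓ → B),
    Function.Injective i ∧
    (∀ t, (i t, b t) ∈ Mopt) ∧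
    ∀ t : Fin ℓ, w0 ≤ w (i t) (b ⟨((t : ℕ) + 1) % ℓ, Nat.mod_lt _ hℓ⟩)

end ClassEF

namespace ClassEF

/-- Degree of a left vertex in a set of edges. -/
def edgeDegA {A B : Type} [DecidableEq A] (S : Finset (A × B)) (a : A) : ℕ :=
  (S.filter fun e => e.1 = a).card

/-- Degree of a right vertex in a set of edges. -/
def edgeDegB {A B : Type} [DecidableEq B] (S : Finset (A × B)) (b : B) : ℕ :=
  (S.filter fun e => e.2 = b).card

/-- A set of edges is connected: any two of its edges are linked by a chain of
edges of `S` successively sharing a vertex. -/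
def EdgeConnected {A B : Type} (S : Finset (A × B)) : Prop :=
  ∀ e ∈ S, ∀ e' ∈ S,
    Relation.ReflTransGen
      (fun f g : A × B => f ∈ S ∧ g ∈ S ∧ (f.1 = g.1 ∨ f.2 = g.2)) e e'

/-- A nonempty set of edges forms a single path: every vertex has degree at most
two, the edge set is connected, and some vertex has degree one. -/
def IsSinglePathEdgeSet {A B : Type} [DecidableEq A] [DecidableEq B]
    (S : Finset (A × B)) : Prop :=
  S.Nonempty ∧ (∀ a : A, edgeDegA S a ≤ 2) ∧ (∀ b : B, edgeDegB S b ≤ 2) ∧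
  EdgeConnected S ∧ ((∃ a : A, edgeDegA S a = 1) ∨ (∃ b : B, edgeDegB S b = 1))

end ClassEF

open Finset
open scoped symmDiff

namespace SimpleGraph

variable {V : Type*} {G : SimpleGraph V} {s t : Finset V}

theorem IsBipartiteWith.induce {S : Set V} [DecidablePred (· ∈ S)] (hst : G.IsBipartiteWith s t) :
    (G.induce S).IsBipartiteWith ↑(s.subtype (· ∈ S)) ↑(t.subtype (· ∈ S)) where
  disjoint := disjoint_coe.mpr <| Finset.disjoint_left.mpr fun _ hs ht =>
    Set.disjoint_left.mp hst.disjoint (mem_subtype.mp hs) (mem_subtype.mp ht)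
  mem_of_adj _ _ hvw := by simpa using hst.mem_of_adj hvw

variable [Fintype V] [DecidableRel G.Adj]

theorem Connected.card_le_sum_degree_add_one (hG : G.Connected) (hst : G.IsBipartiteWith s t) :
    Fintype.card V ≤ ∑ v ∈ s, G.degree v + 1 := by
  rw [isBipartiteWith_sum_degrees_eq_card_edges hst, edgeFinset_card, ← Nat.card_eq_fintype_card,
    ← Nat.card_eq_fintype_card]
  exact hG.card_vert_le_card_edgeSet_add_one

variable [DecidableEq V]

theorem ConnectedComponent.card_add_card_le_sum_degree_add_one
    (hst : G.IsBipartiteWith s t) (c : G.ConnectedComponent) :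
    #{v ∈ s | v ∈ c.supp} + #{v ∈ t | v ∈ c.supp} ≤ ∑ v ∈ s with v ∈ c.supp, G.degree v + 1 := by
  have hconn : (G.induce c.supp).Connected := c.connected_toSimpleGraph
  have hdeg (v : c.supp) : (G.induce c.supp).degree v = G.degree v :=
    degree_induce_of_neighborSet_subset fun _ hw => c.mem_supp_of_adj_mem_supp v.2 hw
  have hcard := hconn.card_le_sum_degree_add_one hst.induce
  rw [sum_congr rfl fun v _ => hdeg v] at hcard
  calc #{v ∈ s | v ∈ c.supp} + #{v ∈ t | v ∈ c.supp}
      = #(s.subtype (· ∈ c.supp) ∪ t.subtype (· ∈ c.supp)) := by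
        rw [card_union_of_disjoint (disjoint_coe.mp hst.induce.disjoint), card_subtype,
          card_subtype]
    _ ≤ Fintype.card c.supp := card_le_univ _
    _ ≤ _ := by
      convert hcard using 2
      exact (sum_subtype_eq_sum_filter _).symm

theorem ConnectedComponent.card_eq_sum_card_filter_mem_supp (u : Finset V) :
    #u = ∑ c : G.ConnectedComponent, #{v ∈ u | v ∈ c.supp} := by
  classical
  rw [card_eq_sum_card_fiberwise fun v _ => mem_univ (G.connectedComponentMk v)]
  exact sum_congr rfl fun c _ => congrArg card (filter_congr fun v _ => (c.mem_supp_iff v).symm)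

end SimpleGraph

theorem Finset.sum_sdiff_union_inter_add_sum_inter {α β : Type*} [DecidableEq α] [AddCommMonoid β]
    (s t u : Finset α) (f : α → β) :
    ∑ x ∈ s \ u ∪ t ∩ u, f x + ∑ x ∈ s ∩ u, f x = ∑ x ∈ s, f x + ∑ x ∈ t ∩ u, f x := by
  rw [sum_union (disjoint_left.mpr fun _ hs ht => (mem_sdiff.mp hs).2 (mem_inter.mp ht).2),
    add_right_comm, add_comm (∑ x ∈ s \ u, f x), sum_inter_add_sum_sdiff]

theorem Finset.card_sdiff_union_inter_add_card_inter {α : Type*} [DecidableEq α]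
    (s t u : Finset α) : #(s \ u ∪ t ∩ u) + #(s ∩ u) = #s + #(t ∩ u) := by
  simp only [card_eq_sum_ones]
  exact sum_sdiff_union_inter_add_sum_inter s t u fun _ => 1

theorem Finset.card_sdiff_eq_card_sdiff_add_one {α : Type*} [DecidableEq α] {s t : Finset α}
    (h : #t = #s + 1) : #(t \ s) = #(s \ t) + 1 := by
  grind

namespace ClassEF

section Exchange

variable {A B : Type*} {M M₁ M₂ C : Finset (A × B)}

def SharesEndpoint (e f : A × B) : Prop := e.1 = f.1 ∨ e.2 = f.2

theorem SharesEndpoint.symm {e f : A × B} (h : SharesEndpoint e f) : SharesEndpoint f e :=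
  h.imp Eq.symm Eq.symm

theorem isMatching_iff : IsMatching M ↔ ∀ e ∈ M, ∀ f ∈ M, SharesEndpoint e f → e = f :=
  ⟨fun h e he f hf hef => hef.elim (h.1 e he f hf) (h.2 e he f hf),
    fun h => ⟨fun e he f hf h1 => h e he f hf (.inl h1), fun e he f hf h2 => h e he f hf (.inr h2)⟩⟩

theorem IsMatching.eq_of_sharesEndpoint (hM : IsMatching M) {e f : A × B} (he : e ∈ M)
    (hf : f ∈ M) (hef : SharesEndpoint e f) : e = f :=
  isMatching_iff.mp hM e he f hf hef

variable [DecidableEq A] [DecidableEq B]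

theorem IsMatching.sdiff_union_inter (hM₁ : IsMatching M₁) (hM₂ : IsMatching M₂)
    (hC : ∀ e ∈ C, ∀ f ∈ M₁ ∆ M₂, SharesEndpoint e f → f ∈ C) :
    IsMatching (M₁ \ C ∪ M₂ ∩ C) := by
  have hcross : ∀ e ∈ M₁ \ C, ∀ f ∈ M₂ ∩ C, ¬ SharesEndpoint e f := by
    intro e he f hf hef
    obtain ⟨heM₁, heC⟩ := mem_sdiff.mp he
    obtain ⟨hfM₂, hfC⟩ := mem_inter.mp hf
    by_cases heM₂ : e ∈ M₂
    · exact heC (hM₂.eq_of_sharesEndpoint heM₂ hfM₂ hef ▸ hfC)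
    · exact heC (hC f hfC e (mem_symmDiff.mpr (.inl ⟨heM₁, heM₂⟩)) hef.symm)
  refine isMatching_iff.mpr fun e he f hf hef => ?_
  rcases mem_union.mp he with he | he <;> rcases mem_union.mp hf with hf | hf
  · exact hM₁.eq_of_sharesEndpoint (mem_sdiff.mp he).1 (mem_sdiff.mp hf).1 hef
  · exact absurd hef (hcross e he f hf)
  · exact absurd hef.symm (hcross f hf e he)
  · exact hM₂.eq_of_sharesEndpoint (mem_inter.mp he).1 (mem_inter.mp hf).1 hef

theorem symmDiff_subset_of_card_inter_eq_succ {w : A → B → ℝ}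
    (hdistinct : ∀ M M' : Finset (A × B), IsMatching M → IsMatching M' → M ≠ M' →
      weightSum w M ≠ weightSum w M')
    {A' : Finset A} {B' : Finset B} {k : ℕ} (hM₁ : IsMaxMatchingOfSize w A' B' k M₁)
    (hM₂ : IsMaxMatchingOfSize w A' B' (k + 1) M₂)
    (hC : ∀ e ∈ C, ∀ f ∈ M₁ ∆ M₂, SharesEndpoint e f → f ∈ C)
    (hcard : #(M₂ ∩ C) = #(M₁ ∩ C) + 1) : M₁ ∆ M₂ ⊆ C := by
  obtain ⟨hm₁, hsub₁, hcard₁, hmax₁⟩ := hM₁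
  obtain ⟨hm₂, hsub₂, hcard₂, hmax₂⟩ := hM₂
  have hC' : ∀ e ∈ C, ∀ f ∈ M₂ ∆ M₁, SharesEndpoint e f → f ∈ C := by
    simpa only [symmDiff_comm M₂ M₁] using hC
  have hsub {M M' : Finset (A × B)} (hM : M ⊆ A' ×ˢ B') (hM' : M' ⊆ A' ×ˢ B') :
      M \ C ∪ M' ∩ C ⊆ A' ×ˢ B' :=
    union_subset (sdiff_subset.trans hM) (inter_subset_left.trans hM')
  have hN₁ := hmax₂ _ (hm₁.sdiff_union_inter hm₂ hC) (hsub hsub₁ hsub₂) (by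
    have := card_sdiff_union_inter_add_card_inter M₁ M₂ C
    omega)
  have hN₂ := hmax₁ _ (hm₂.sdiff_union_inter hm₁ hC') (hsub hsub₂ hsub₁) (by
    have := card_sdiff_union_inter_add_card_inter M₂ M₁ C
    omega)
  -- the two exchanged matchings together weigh as much as `M₁` and `M₂`, and each is at most
  -- the optimum of its size
  have hweight : weightSum w (M₁ \ C ∪ M₂ ∩ C) = weightSum w M₂ := by
    have h₁ := sum_sdiff_union_inter_add_sum_inter M₁ M₂ C fun e => w e.1 e.2
    have h₂ := sum_sdiff_union_inter_add_sum_inter M₂ M₁ C fun e => w e.1 e.2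
    unfold weightSum at *
    linarith
  have hN : M₁ \ C ∪ M₂ ∩ C = M₂ := by
    by_contra hne
    exact hdistinct _ _ (hm₁.sdiff_union_inter hm₂ hC) hm₂ hne hweight
  intro e he
  rcases mem_symmDiff.mp he with ⟨he₁, he₂⟩ | ⟨he₂, he₁⟩
  · by_contra heC
    exact he₂ (hN ▸ mem_union_left _ (mem_sdiff.mpr ⟨he₁, heC⟩))
  · rcases mem_union.mp (hN.symm ▸ he₂) with h | h
    · exact absurd (mem_sdiff.mp h).1 he₁
    · exact (mem_inter.mp h).2

end Exchange

section LineGraph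

variable {A B : Type} {M M₁ M₂ : Finset (A × B)}

theorem IsMatching.edgeDegA_le_one [DecidableEq A] (hM : IsMatching M) (a : A) :
    edgeDegA M a ≤ 1 :=
  card_le_one.mpr fun e he f hf => hM.1 e (mem_filter.mp he).1 f (mem_filter.mp hf).1
    ((mem_filter.mp he).2.trans (mem_filter.mp hf).2.symm)

theorem IsMatching.edgeDegB_le_one [DecidableEq B] (hM : IsMatching M) (b : B) :
    edgeDegB M b ≤ 1 :=
  card_le_one.mpr fun e he f hf => hM.2 e (mem_filter.mp he).1 f (mem_filter.mp hf).1
    ((mem_filter.mp he).2.trans (mem_filter.mp hf).2.symm)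

theorem edgeDegA_eq_zero_iff [DecidableEq A] {a : A} : edgeDegA M a = 0 ↔ ¬ coveredA M a := by
  rw [edgeDegA, card_eq_zero, filter_eq_empty_iff]
  exact ⟨fun h ⟨b, hb⟩ => h hb rfl, fun h e he hea => h ⟨e.2, hea ▸ he⟩⟩

theorem edgeDegB_eq_zero_iff [DecidableEq B] {b : B} : edgeDegB M b = 0 ↔ ¬ coveredB M b := by
  rw [edgeDegB, card_eq_zero, filter_eq_empty_iff]
  exact ⟨fun h ⟨a, ha⟩ => h ha rfl, fun h e he heb => h ⟨e.1, heb ▸ he⟩⟩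

/-- The line graph of the edge set `D`, on the type of all edges: those outside `D` are isolated. -/
def lineGraph (D : Finset (A × B)) : SimpleGraph (A × B) where
  Adj e f := e ∈ D ∧ f ∈ D ∧ e ≠ f ∧ SharesEndpoint e f
  symm := ⟨fun _ _ h => ⟨h.2.1, h.1, h.2.2.1.symm, h.2.2.2.symm⟩⟩
  loopless := ⟨fun _ h => h.2.2.1 rfl⟩

theorem lineGraph_adj {D : Finset (A × B)} {e f : A × B} :
    (lineGraph D).Adj e f ↔ e ∈ D ∧ f ∈ D ∧ e ≠ f ∧ SharesEndpoint e f :=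
  Iff.rfl

theorem edgeConnected_of_forall_mem_supp {D : Finset (A × B)}
    {c : (lineGraph D).ConnectedComponent} (hc : ∀ e ∈ D, e ∈ c.supp) : EdgeConnected D :=
  fun e he f hf =>
  Relation.ReflTransGen.mono (fun _ _ h => ⟨h.1, h.2.1, h.2.2.2⟩) _ _
    ((SimpleGraph.reachable_iff_reflTransGen e f).mp (c.reachable_of_mem_supp (hc e he) (hc f hf)))

variable [DecidableEq A] [DecidableEq B]

instance (D : Finset (A × B)) : DecidableRel (lineGraph D).Adj := fun e f =>
  inferInstanceAs (Decidable (e ∈ D ∧ f ∈ D ∧ e ≠ f ∧ (e.1 = f.1 ∨ e.2 = f.2)))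

theorem edgeDegA_symmDiff_le_two (hM₁ : IsMatching M₁) (hM₂ : IsMatching M₂) (a : A) :
    edgeDegA (M₁ ∆ M₂) a ≤ 2 := by
  have : edgeDegA (M₁ ∆ M₂) a ≤ edgeDegA M₁ a + edgeDegA M₂ a := by
    unfold edgeDegA
    refine (card_le_card (filter_subset_filter _ symmDiff_subset_union)).trans ?_
    rw [filter_union]
    exact card_union_le _ _
  linarith [hM₁.edgeDegA_le_one a, hM₂.edgeDegA_le_one a]

theorem edgeDegB_symmDiff_le_two (hM₁ : IsMatching M₁) (hM₂ : IsMatching M₂) (b : B) :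
    edgeDegB (M₁ ∆ M₂) b ≤ 2 := by
  have : edgeDegB (M₁ ∆ M₂) b ≤ edgeDegB M₁ b + edgeDegB M₂ b := by
    unfold edgeDegB
    refine (card_le_card (filter_subset_filter _ symmDiff_subset_union)).trans ?_
    rw [filter_union]
    exact card_union_le _ _
  linarith [hM₁.edgeDegB_le_one b, hM₂.edgeDegB_le_one b]

/-- By pigeonhole, some left endpoint of an edge of `M₂ \ M₁` is not an endpoint of `M₁ \ M₂`. -/
theorem exists_edgeDegA_symmDiff_eq_one (hM₂ : IsMatching M₂) (h : #(M₁ \ M₂) < #(M₂ \ M₁)) :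
    ∃ a, edgeDegA (M₁ ∆ M₂) a = 1 := by
  have hinj : Set.InjOn Prod.fst ↑(M₂ \ M₁) := fun e he f hf hef =>
    hM₂.1 e (Finset.mem_sdiff.mp he).1 f (Finset.mem_sdiff.mp hf).1 hef
  obtain ⟨a, ha, ha'⟩ := exists_mem_notMem_of_card_lt_card
    (card_image_le.trans_lt (h.trans_eq (card_image_of_injOn hinj).symm))
  obtain ⟨e, he, rfl⟩ := mem_image.mp ha
  refine ⟨e.1, card_eq_one.mpr ⟨e, eq_singleton_iff_unique_mem.mpr
    ⟨mem_filter.mpr ⟨mem_symmDiff.mpr (.inr (mem_sdiff.mp he)), rfl⟩, fun f hf => ?_⟩⟩⟩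
  obtain ⟨hf, hfe⟩ := mem_filter.mp hf
  rcases mem_symmDiff.mp hf with hf | hf
  · exact absurd (mem_image.mpr ⟨f, mem_sdiff.mpr hf, hfe⟩) ha'
  · exact hM₂.1 f hf.1 e (mem_sdiff.mp he).1 hfe

theorem isBipartiteWith_lineGraph_symmDiff (hM₁ : IsMatching M₁) (hM₂ : IsMatching M₂) :
    (lineGraph (M₁ ∆ M₂)).IsBipartiteWith ↑(M₁ \ M₂) ↑(M₂ \ M₁) where
  disjoint := disjoint_coe.mpr disjoint_sdiff_sdiff
  mem_of_adj e f hadj := by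
    obtain ⟨he, hf, hne, hef⟩ := lineGraph_adj.mp hadj
    rcases mem_symmDiff.mp he with he | he <;> rcases mem_symmDiff.mp hf with hf | hf
    · exact absurd (hM₁.eq_of_sharesEndpoint he.1 hf.1 hef) hne
    · exact .inl ⟨mem_sdiff.mpr he, mem_sdiff.mpr hf⟩
    · exact .inr ⟨mem_sdiff.mpr he, mem_sdiff.mpr hf⟩
    · exact absurd (hM₂.eq_of_sharesEndpoint he.1 hf.1 hef) hne

variable [Fintype A] [Fintype B]

theorem degree_lineGraph_symmDiff_le (hM₁ : IsMatching M₁) {e : A × B} (he : e ∈ M₁) :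
    (lineGraph (M₁ ∆ M₂)).degree e ≤ edgeDegA M₂ e.1 + edgeDegB M₂ e.2 := by
  rw [← SimpleGraph.card_neighborFinset_eq_degree, edgeDegA, edgeDegB]
  refine (card_le_card fun f hf => ?_).trans (card_union_le _ _)
  obtain ⟨-, hf, hne, hef⟩ :=
    lineGraph_adj.mp ((lineGraph (M₁ ∆ M₂)).mem_neighborFinset e f |>.mp hf)
  have hfM₂ : f ∈ M₂ := by
    rcases mem_symmDiff.mp hf with hf | hf
    · exact absurd (hM₁.eq_of_sharesEndpoint he hf.1 hef) hne
    · exact hf.1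
  rcases hef with h | h
  · exact mem_union_left _ (mem_filter.mpr ⟨hfM₂, h.symm⟩)
  · exact mem_union_right _ (mem_filter.mpr ⟨hfM₂, h.symm⟩)

theorem card_add_card_le_sum_edgeDeg (hM₁ : IsMatching M₁) (hM₂ : IsMatching M₂)
    (c : (lineGraph (M₁ ∆ M₂)).ConnectedComponent) :
    #{e ∈ M₁ \ M₂ | e ∈ c.supp} + #{e ∈ M₂ \ M₁ | e ∈ c.supp} ≤
      ∑ e ∈ M₁ \ M₂ with e ∈ c.supp, (edgeDegA M₂ e.1 + edgeDegB M₂ e.2) + 1 :=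
  (c.card_add_card_le_sum_degree_add_one (isBipartiteWith_lineGraph_symmDiff hM₁ hM₂)).trans
    (Nat.add_le_add_right (sum_le_sum fun _ he =>
      degree_lineGraph_symmDiff_le hM₁ (mem_sdiff.mp (mem_filter.mp he).1).1) 1)

theorem exists_connectedComponent_card_eq_succ (hM₁ : IsMatching M₁) (hM₂ : IsMatching M₂)
    (hcard : #(M₂ \ M₁) = #(M₁ \ M₂) + 1) :
    ∃ c : (lineGraph (M₁ ∆ M₂)).ConnectedComponent,
      #{e ∈ M₂ \ M₁ | e ∈ c.supp} = #{e ∈ M₁ \ M₂ | e ∈ c.supp} + 1 := by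
  have hle (c : (lineGraph (M₁ ∆ M₂)).ConnectedComponent) :
      #{e ∈ M₂ \ M₁ | e ∈ c.supp} ≤ #{e ∈ M₁ \ M₂ | e ∈ c.supp} + 1 := by
    have hbound := card_add_card_le_sum_edgeDeg hM₁ hM₂ c
    have htwo : ∑ e ∈ M₁ \ M₂ with e ∈ c.supp, (edgeDegA M₂ e.1 + edgeDegB M₂ e.2) ≤
        ∑ e ∈ M₁ \ M₂ with e ∈ c.supp, 2 :=
      sum_le_sum fun e _ => add_le_add (hM₂.edgeDegA_le_one e.1) (hM₂.edgeDegB_le_one e.2)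
    rw [sum_const, smul_eq_mul] at htwo
    omega
  obtain ⟨c, -, hc⟩ := exists_lt_of_sum_lt (s := univ)
    (f := fun c : (lineGraph (M₁ ∆ M₂)).ConnectedComponent => #{e ∈ M₁ \ M₂ | e ∈ c.supp})
    (g := fun c => #{e ∈ M₂ \ M₁ | e ∈ c.supp}) (by
      simp only [← SimpleGraph.ConnectedComponent.card_eq_sum_card_filter_mem_supp]
      omega)
  exact ⟨c, le_antisymm (hle c) hc⟩

theorem exists_connectedComponent_forall_mem_supp {w : A → B → ℝ}
    (hdistinct : ∀ M M' : Finset (A × B), IsMatching M → IsMatching M' → M ≠ M' →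
      weightSum w M ≠ weightSum w M')
    {A' : Finset A} {B' : Finset B} {k : ℕ} (hM₁ : IsMaxMatchingOfSize w A' B' k M₁)
    (hM₂ : IsMaxMatchingOfSize w A' B' (k + 1) M₂) :
    ∃ c : (lineGraph (M₁ ∆ M₂)).ConnectedComponent, ∀ e ∈ M₁ ∆ M₂, e ∈ c.supp := by
  have hcard : #(M₂ \ M₁) = #(M₁ \ M₂) + 1 :=
    card_sdiff_eq_card_sdiff_add_one (by rw [hM₁.2.2.1, hM₂.2.2.1])
  obtain ⟨c, hc⟩ := exists_connectedComponent_card_eq_succ hM₁.1 hM₂.1 hcard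
  refine ⟨c, fun e he => (mem_filter.mp (symmDiff_subset_of_card_inter_eq_succ hdistinct hM₁ hM₂
    (C := (M₁ ∆ M₂).filter (· ∈ c.supp)) ?_ ?_ he)).2⟩
  · intro e he f hf hef
    obtain ⟨heD, hec⟩ := mem_filter.mp he
    refine mem_filter.mpr ⟨hf, ?_⟩
    by_cases hne : e = f
    · exact hne ▸ hec
    · exact c.mem_supp_of_adj_mem_supp hec (lineGraph_adj.mpr ⟨heD, hf, hne, hef⟩)
  · have h₁ : M₁ ∩ (M₁ ∆ M₂).filter (· ∈ c.supp) = {e ∈ M₁ \ M₂ | e ∈ c.supp} := by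
      ext e
      simp only [mem_inter, mem_filter, mem_symmDiff, Finset.mem_sdiff]
      tauto
    have h₂ : M₂ ∩ (M₁ ∆ M₂).filter (· ∈ c.supp) = {e ∈ M₂ \ M₁ | e ∈ c.supp} := by
      ext e
      simp only [mem_inter, mem_filter, mem_symmDiff, Finset.mem_sdiff]
      tauto
    rw [h₁, h₂, hc]

theorem coveredA_and_coveredB_of_mem (hM₁ : IsMatching M₁) (hM₂ : IsMatching M₂)
    (hcard : #(M₂ \ M₁) = #(M₁ \ M₂) + 1) {c : (lineGraph (M₁ ∆ M₂)).ConnectedComponent}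
    (hc : ∀ e ∈ M₁ ∆ M₂, e ∈ c.supp) {e : A × B} (he : e ∈ M₁) :
    coveredA M₂ e.1 ∧ coveredB M₂ e.2 := by
  by_cases heM₂ : e ∈ M₂
  · exact ⟨⟨e.2, heM₂⟩, ⟨e.1, heM₂⟩⟩
  by_contra hcov
  have hdeg : edgeDegA M₂ e.1 + edgeDegB M₂ e.2 < 2 := by
    rcases not_and_or.mp hcov with h | h
    · have := hM₂.edgeDegB_le_one e.2
      rw [edgeDegA_eq_zero_iff.mpr h]
      omega
    · have := hM₂.edgeDegA_le_one e.1
      rw [edgeDegB_eq_zero_iff.mpr h]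
      omega
  have hbound := card_add_card_le_sum_edgeDeg hM₁ hM₂ c
  rw [filter_true_of_mem fun f hf => hc f (mem_symmDiff.mpr (.inl (mem_sdiff.mp hf))),
    filter_true_of_mem fun f hf => hc f (mem_symmDiff.mpr (.inr (mem_sdiff.mp hf)))] at hbound
  have hlt : ∑ f ∈ M₁ \ M₂, (edgeDegA M₂ f.1 + edgeDegB M₂ f.2) < ∑ f ∈ M₁ \ M₂, 2 :=
    sum_lt_sum (fun f _ => add_le_add (hM₂.edgeDegA_le_one f.1) (hM₂.edgeDegB_le_one f.2))
      ⟨e, mem_sdiff.mpr ⟨he, heM₂⟩, hdeg⟩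
  rw [sum_const, smul_eq_mul] at hlt
  omega

end LineGraph

theorem stmt2_general {A B : Type} [Fintype A] [Fintype B] [DecidableEq A] [DecidableEq B]
    (w : A → B → ℝ)
    (hdistinct : ∀ M₁ M₂ : Finset (A × B), IsMatching M₁ → IsMatching M₂ → M₁ ≠ M₂ →
      weightSum w M₁ ≠ weightSum w M₂)
    (A' : Finset A) (B' : Finset B) (r : ℕ) (hr1 : 1 < r)
    (M₁ M₂ : Finset (A × B))
    (hM₁ : IsMaxMatchingOfSize w A' B' (r - 1) M₁)
    (hM₂ : IsMaxMatchingOfSize w A' B' r M₂) :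
    IsSinglePathEdgeSet ((M₁ \ M₂) ∪ (M₂ \ M₁)) ∧
    (∀ a : A, coveredA M₁ a → coveredA M₂ a) ∧
    (∀ b : B, coveredB M₁ b → coveredB M₂ b) := by
  obtain ⟨k, rfl⟩ : ∃ k, r = k + 1 := ⟨r - 1, by omega⟩
  rw [Nat.add_sub_cancel] at hM₁
  have hcard : #(M₂ \ M₁) = #(M₁ \ M₂) + 1 :=
    card_sdiff_eq_card_sdiff_add_one (by rw [hM₁.2.2.1, hM₂.2.2.1])
  obtain ⟨c, hc⟩ := exists_connectedComponent_forall_mem_supp hdistinct hM₁ hM₂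
  have hcov (e : A × B) (he : e ∈ M₁) := coveredA_and_coveredB_of_mem hM₁.1 hM₂.1 hcard hc he
  refine ⟨⟨(card_pos.mp (by omega)).mono subset_union_right, edgeDegA_symmDiff_le_two hM₁.1 hM₂.1,
    edgeDegB_symmDiff_le_two hM₁.1 hM₂.1, edgeConnected_of_forall_mem_supp hc,
    .inl (exists_edgeDegA_symmDiff_eq_one hM₂.1 (by omega))⟩,
    fun a ⟨b, hab⟩ => (hcov _ hab).1, fun b ⟨a, hab⟩ => (hcov _ hab).2⟩

/-- if no two distinct matchings have the same total weight, then the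
symmetric difference of the maximum-weight matchings with `r-1` and `r` edges in an
induced subgraph is a single path; consequently every vertex covered by the smaller
matching is covered by the larger one. -/
theorem stmt2 {A B : Type} [Fintype A] [Fintype B] [DecidableEq A] [DecidableEq B]
    (w : A → B → ℝ) (hw : ∀ a b, 0 ≤ w a b)
    (hdistinct : ∀ M₁ M₂ : Finset (A × B), IsMatching M₁ → IsMatching M₂ → M₁ ≠ M₂ →
      weightSum w M₁ ≠ weightSum w M₂)
    (A' : Finset A) (B' : Finset B) (r : ℕ) (hr1 : 1 < r)
    (hr2 : r ≤ min A'.card B'.card)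
    (M₁ M₂ : Finset (A × B))
    (hM₁ : IsMaxMatchingOfSize w A' B' (r - 1) M₁)
    (hM₂ : IsMaxMatchingOfSize w A' B' r M₂) :
    IsSinglePathEdgeSet ((M₁ \ M₂) ∪ (M₂ \ M₁)) ∧
    (∀ a : A, coveredA M₁ a → coveredA M₂ a) ∧
    (∀ b : B, coveredB M₁ b → coveredB M₂ b) :=
  stmt2_general w hdistinct A' B' r hr1 M₁ M₂ hM₁ hM₂

end ClassEF
end

section
/- Suppose there exist k pairwise disjoint bundles I_1, I_2, …, I_k ⊆ I such that for every p ∈ {1,…,k}, |I_p| = n_p and I_p maximizes v_p(I') over all bundles I' ⊆ I with |I'| = n_p. Then every maximum-weight matching in G is class envy-free and non-wasteful. -/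
open MeasureTheory ProbabilityTheory Filter
open scoped ENNReal

/-!
Gluing maximum-weight matchings of the classes `N_p` with their bundles `I_p` (disjoint on both
sides) gives a matching of weight `∑ p, v_p(I_p)`, so a maximum-weight matching `M` has
`∑ p, u_p(M) ≥ ∑ p, v_p(I_p)`. Conversely `u_p(M) ≤ v_p(I_p)` for every `p`: a matching of `N_p`
uses at most `n_p` items, so `I_p` is best for `p` among all bundles, not only those of size
`n_p`. Hence `u_p(M) = v_p(I_p) ≥ v_p(S)` for every bundle `S`. With `S = M(N_q)` this is
envy-freeness; with `S = M(N_p) ∪ {j}` it shows that no item raises the value of a class, so no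
item is wasted.
-/

namespace ClassEF

variable {A B ι : Type*}

theorem IsMatching.mono {M M' : Finset (A × B)} (hM : IsMatching M) (h : M' ⊆ M) :
    IsMatching M' :=
  ⟨fun e he e' he' => hM.1 e (h he) e' (h he'), fun e he e' he' => hM.2 e (h he) e' (h he')⟩

theorem IsMatching.card_le_of_subset_product {M : Finset (A × B)} {Np : Finset A} {S : Finset B}
    (hM : IsMatching M) (hMS : M ⊆ Np ×ˢ S) : M.card ≤ Np.card := by
  classical
  calc M.card = (M.image Prod.fst).card :=
        (Finset.card_image_of_injOn fun e he e' he' => hM.1 e he e' he').symm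
    _ ≤ Np.card := Finset.card_le_card fun a ha => by
        obtain ⟨e, he, rfl⟩ := Finset.mem_image.1 ha
        exact (Finset.mem_product.1 (hMS he)).1

section Valuation

variable [DecidableEq A] [DecidableEq B]

theorem weightSum_le_vval (w : A → B → ℝ) {Np : Finset A} {S : Finset B} {M : Finset (A × B)}
    (hM : IsMatching M) (hMS : M ⊆ Np ×ˢ S) : weightSum w M ≤ vval w Np S := by
  classical
  exact Finset.le_sup' (weightSum w) (Finset.mem_filter.2 ⟨Finset.mem_powerset.2 hMS, hM⟩)

theorem exists_isMatching_weightSum_eq_vval (w : A → B → ℝ) (Np : Finset A) (S : Finset B) :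
    ∃ M : Finset (A × B), IsMatching M ∧ M ⊆ Np ×ˢ S ∧ weightSum w M = vval w Np S := by
  classical
  obtain ⟨M, hmem, hval⟩ := Finset.exists_mem_eq_sup'
    (⟨∅, by simp [IsMatching]⟩ : ((Np ×ˢ S).powerset.filter fun M => IsMatching M).Nonempty)
    (weightSum w)
  rw [Finset.mem_filter, Finset.mem_powerset] at hmem
  exact ⟨M, hmem.2, hmem.1, by rw [vval, hval]⟩

theorem vval_mono (w : A → B → ℝ) (Np : Finset A) {S T : Finset B} (h : S ⊆ T) :
    vval w Np S ≤ vval w Np T := by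
  obtain ⟨M, hM, hMS, hval⟩ := exists_isMatching_weightSum_eq_vval w Np S
  exact hval ▸ weightSum_le_vval w hM (hMS.trans (Finset.product_subset_product_right h))

theorem exists_subset_card_le_vval_eq (w : A → B → ℝ) (Np : Finset A) (S : Finset B) :
    ∃ T ⊆ S, T.card ≤ Np.card ∧ vval w Np T = vval w Np S := by
  obtain ⟨M, hM, hMS, hval⟩ := exists_isMatching_weightSum_eq_vval w Np S
  have hMT : M ⊆ Np ×ˢ M.image Prod.snd := fun e he =>
    Finset.mem_product.2 ⟨(Finset.mem_product.1 (hMS he)).1, Finset.mem_image_of_mem _ he⟩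
  refine ⟨M.image Prod.snd, fun b hb => ?_, ?_, ?_⟩
  · obtain ⟨e, he, rfl⟩ := Finset.mem_image.1 hb
    exact (Finset.mem_product.1 (hMS he)).2
  · exact Finset.card_image_le.trans (hM.card_le_of_subset_product hMS)
  · refine le_antisymm (vval_mono w Np fun b hb => ?_) (hval ▸ weightSum_le_vval w hM hMT)
    obtain ⟨e, he, rfl⟩ := Finset.mem_image.1 hb
    exact (Finset.mem_product.1 (hMS he)).2

theorem vval_le_of_forall_card_eq [Fintype B] (w : A → B → ℝ) {Np : Finset A} {Ip : Finset B}
    (hcard : Ip.card = Np.card)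
    (hmax : ∀ I' : Finset B, I'.card = Np.card → vval w Np I' ≤ vval w Np Ip)
    (S : Finset B) : vval w Np S ≤ vval w Np Ip := by
  obtain ⟨T, -, hTcard, hTS⟩ := exists_subset_card_le_vval_eq w Np S
  obtain ⟨T', hTT', hT'card⟩ :=
    Finset.exists_superset_card_eq hTcard (hcard ▸ Finset.card_le_univ Ip)
  calc vval w Np S = vval w Np T := hTS.symm
    _ ≤ vval w Np T' := vval_mono w Np hTT'
    _ ≤ vval w Np Ip := hmax T' hT'card

theorem classUtil_le_vval_bundleOf (w : A → B → ℝ) {M : Finset (A × B)} (hM : IsMatching M)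
    (S : Finset A) : classUtil w M S ≤ vval w S (bundleOf M S) :=
  weightSum_le_vval w (hM.mono (Finset.filter_subset _ _)) fun _ he =>
    Finset.mem_product.2 ⟨(Finset.mem_filter.1 he).2, Finset.mem_image_of_mem _ he⟩

end Valuation

section Classes

variable [DecidableEq A] {cls : ι → Finset A}

theorem sum_classUtil_eq_weightSum [Fintype ι] (w : A → B → ℝ) (M : Finset (A × B))
    (hcls : ∀ p q, p ≠ q → Disjoint (cls p) (cls q)) (hcover : ∀ a, ∃ p, a ∈ cls p) :
    ∑ p, classUtil w M (cls p) = weightSum w M := by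
  simp only [classUtil, Finset.sum_filter]
  rw [Finset.sum_comm, weightSum]
  refine Finset.sum_congr rfl fun e _ => ?_
  obtain ⟨p, hp⟩ := hcover e.1
  rw [Finset.sum_eq_single p (fun q _ hqp => if_neg fun hq =>
    Finset.disjoint_left.1 (hcls q p hqp) hq hp) (absurd (Finset.mem_univ p)), if_pos hp]

variable [DecidableEq B]

theorem isMatching_biUnion {Ib : ι → Finset B} {Mb : ι → Finset (A × B)} (s : Finset ι)
    (hcls : ∀ p q, p ≠ q → Disjoint (cls p) (cls q))
    (hIb : ∀ p q, p ≠ q → Disjoint (Ib p) (Ib q))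
    (hMb : ∀ p, IsMatching (Mb p)) (hsub : ∀ p, Mb p ⊆ cls p ×ˢ Ib p) :
    IsMatching (s.biUnion Mb) := by
  have mem : ∀ {p e}, e ∈ Mb p → e.1 ∈ cls p ∧ e.2 ∈ Ib p := fun he =>
    Finset.mem_product.1 (hsub _ he)
  constructor
  · intro e he e' he' h
    obtain ⟨p, -, hep⟩ := Finset.mem_biUnion.1 he
    obtain ⟨q, -, heq⟩ := Finset.mem_biUnion.1 he'
    obtain rfl : p = q := by_contra fun hpq =>
      Finset.disjoint_left.1 (hcls p q hpq) (mem hep).1 (h ▸ (mem heq).1)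
    exact (hMb p).1 e hep e' heq h
  · intro e he e' he' h
    obtain ⟨p, -, hep⟩ := Finset.mem_biUnion.1 he
    obtain ⟨q, -, heq⟩ := Finset.mem_biUnion.1 he'
    obtain rfl : p = q := by_contra fun hpq =>
      Finset.disjoint_left.1 (hIb p q hpq) (mem hep).2 (h ▸ (mem heq).2)
    exact (hMb p).2 e hep e' heq h

theorem exists_isMatching_weightSum_eq_sum_vval [Fintype ι] (w : A → B → ℝ) {Ib : ι → Finset B}
    (hcls : ∀ p q, p ≠ q → Disjoint (cls p) (cls q))
    (hIb : ∀ p q, p ≠ q → Disjoint (Ib p) (Ib q)) :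
    ∃ M : Finset (A × B), IsMatching M ∧ weightSum w M = ∑ p, vval w (cls p) (Ib p) := by
  choose Mb hMb hsub hval using fun p => exists_isMatching_weightSum_eq_vval w (cls p) (Ib p)
  refine ⟨Finset.univ.biUnion Mb, isMatching_biUnion _ hcls hIb hMb hsub, ?_⟩
  rw [weightSum, Finset.sum_biUnion fun p _ q _ hpq => Finset.disjoint_left.2 fun e hep heq =>
    Finset.disjoint_left.1 (hcls p q hpq) (Finset.mem_product.1 (hsub p hep)).1
      (Finset.mem_product.1 (hsub q heq)).1]
  exact Finset.sum_congr rfl fun p _ => hval p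

theorem vval_le_classUtil_of_isMaxWeightMatching [Fintype B] [Fintype ι] {w : A → B → ℝ}
    {Ib : ι → Finset B} (hcls : ∀ p q, p ≠ q → Disjoint (cls p) (cls q))
    (hcover : ∀ a, ∃ p, a ∈ cls p) (hIb : ∀ p q, p ≠ q → Disjoint (Ib p) (Ib q))
    (hcard : ∀ p, (Ib p).card = (cls p).card)
    (hmax : ∀ p, ∀ I' : Finset B, I'.card = (cls p).card →
      vval w (cls p) I' ≤ vval w (cls p) (Ib p))
    {M : Finset (A × B)} (hM : IsMaxWeightMatching w M) (p : ι) (S : Finset B) :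
    vval w (cls p) S ≤ classUtil w M (cls p) := by
  have hopt : ∀ p S, vval w (cls p) S ≤ vval w (cls p) (Ib p) := fun p =>
    vval_le_of_forall_card_eq w (hcard p) (hmax p)
  have hle : ∀ p ∈ Finset.univ, classUtil w M (cls p) ≤ vval w (cls p) (Ib p) := fun p _ =>
    (classUtil_le_vval_bundleOf w hM.1 _).trans (hopt p _)
  obtain ⟨M', hM', hweight⟩ := exists_isMatching_weightSum_eq_sum_vval w hcls hIb
  have hsum : ∑ p, classUtil w M (cls p) = ∑ p, vval w (cls p) (Ib p) :=
    (Finset.sum_le_sum hle).antisymm <| by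
      rw [sum_classUtil_eq_weightSum w M hcls hcover, ← hweight]
      exact hM.2 M' hM'
  exact (hopt p S).trans ((Finset.sum_eq_sum_iff_of_le hle).1 hsum p (Finset.mem_univ p)).ge

end Classes

theorem stmt3_general {n m k : ℕ} (cls : Fin k → Finset (Fin n))
    (hpart : IsClassPartition cls)
    (u : Fin n → Fin m → ℝ)
    (Ib : Fin k → Finset (Fin m))
    (hdisj : ∀ p q : Fin k, p ≠ q → Disjoint (Ib p) (Ib q))
    (hcard : ∀ p, (Ib p).card = (cls p).card)
    (hmax : ∀ p, ∀ I' : Finset (Fin m), I'.card = (cls p).card →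
      vval u (cls p) I' ≤ vval u (cls p) (Ib p))
    (M : Finset (Fin n × Fin m)) (hM : IsMaxWeightMatching u M) :
    ClassEnvyFree u cls M ∧ NonWasteful u cls M := by
  have hcover : ∀ a, ∃ p, a ∈ cls p := fun a => by
    obtain ⟨p, -, hp⟩ := Finset.mem_biUnion.1 (hpart.2.2 ▸ Finset.mem_univ a)
    exact ⟨p, hp⟩
  have hbest := vval_le_classUtil_of_isMaxWeightMatching hpart.2.1 hcover hdisj hcard hmax hM
  have no_gain : ∀ p j, ¬ vval u (cls p) (bundleOf M (cls p))
      < vval u (cls p) (insert j (bundleOf M (cls p))) := fun p j =>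
    not_lt.2 ((hbest p _).trans (classUtil_le_vval_bundleOf u hM.1 _))
  refine ⟨fun p q _ => hbest p _, fun j hj => ?_⟩
  rcases hj with ⟨-, p, hlt⟩ | ⟨-, -, -, p, -, hlt⟩ <;> exact no_gain p j hlt

/-- if there exist pairwise disjoint bundles, one per class, each of
size `n_p` and maximizing the assignment valuation of its class among all bundles
of that size, then every maximum-weight matching is class envy-free and
non-wasteful. -/
theorem stmt3 {n m k : ℕ} (cls : Fin k → Finset (Fin n))
    (hpart : IsClassPartition cls)
    (u : Fin n → Fin m → ℝ) (hu : ∀ i j, u i j ∈ Set.Icc (0 : ℝ) 1)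
    (Ib : Fin k → Finset (Fin m))
    (hdisj : ∀ p q : Fin k, p ≠ q → Disjoint (Ib p) (Ib q))
    (hcard : ∀ p, (Ib p).card = (cls p).card)
    (hmax : ∀ p, ∀ I' : Finset (Fin m), I'.card = (cls p).card →
      vval u (cls p) I' ≤ vval u (cls p) (Ib p))
    (M : Finset (Fin n × Fin m)) (hM : IsMaxWeightMatching u M) :
    ClassEnvyFree u cls M ∧ NonWasteful u cls M :=
  stmt3_general cls hpart u Ib hdisj hcard hmax M hM

end ClassEF
end
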